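/- For every modulus κ with 0 < κ < 1, the function rn : ℝ → ℝ satisfies rn(0) = 0 and the differential equation (rn'(u))² = rn(u)⁴ − rn(u)² + κ²/4 for all real u. -/

import Mathlib

open Real

/-- The Gauss hypergeometric series `F(a, b; c; x)` with real parameters. -/
noncomputable def hyperF (a b c x : ℝ) : ℝ :=
  ∑' n : ℕ, (Polynomial.eval a (ascPochhammer ℝ n) * Polynomial.eval b (ascPochhammer ℝ n) /
      (Polynomial.eval c (ascPochhammer ℝ n) * (Nat.factorial n : ℝ))) * x ^ n

/-- `G κ T = ∫₀^T F(1/4, 3/4; 1/2; κ² sin² t) dt`. -/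
noncomputable def G (κ T : ℝ) : ℝ :=
  ∫ t in (0:ℝ)..T, hyperF (1/4) (3/4) (1/2) (κ ^ 2 * Real.sin t ^ 2)

/-- The complete integral `K = G κ (π/2)`. -/
noncomputable def K (κ : ℝ) : ℝ := G κ (Real.pi / 2)

/-- The auxiliary function `ψ = arcsin (κ sin φ)`. -/
noncomputable def psi (κ : ℝ) (φ : ℝ → ℝ) (u : ℝ) : ℝ :=
  Real.arcsin (κ * Real.sin (φ u))

/-- The root function `rn = sin (ψ/2)`. -/
noncomputable def rn (κ : ℝ) (φ : ℝ → ℝ) (u : ℝ) : ℝ :=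
  Real.sin (psi κ φ u / 2)

/-!
By the binomial series, `F(1/4, 3/4; 1/2; z²)` is the even part of `(1 - z)^(-1/2)`, i.e.
`((1 - z)^(-1/2) + (1 + z)^(-1/2)) / 2`. With `z = κ sin t = sin ψ` this equals
`cos (ψ/2) / cos ψ`, because `√(1 - sin ψ) + √(1 + sin ψ) = 2 cos (ψ/2)`. The chain rule
then gives `d/dt sin (ψ/2) = (κ/2) cos t · G'(t)`, and since `φ' = 1 / G'(φ)` the factor
`G'` cancels: `rn' = (κ/2) cos φ`. The differential equation is then the identity
`sin⁴(ψ/2) - sin²(ψ/2) = -sin² ψ / 4 = -κ² sin² φ / 4`.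
-/

theorem Ring.choose_add_sub_one_eq {K : Type*} [Field K] [CharZero K] (a : K) (n : ℕ) :
    Ring.choose (a + n - 1) n = (ascPochhammer K n).eval a / n.factorial := by
  rw [Ring.choose_eq_smul, Polynomial.descPochhammer_smeval_eq_ascPochhammer,
    Polynomial.ascPochhammer_smeval_cast, Polynomial.ascPochhammer_smeval_eq_eval,
    smul_eq_mul, inv_mul_eq_div]
  ring_nf

theorem ascPochhammer_eval_two_mul {K : Type*} [Field K] [CharZero K] (a : K) (m : ℕ) :
    (ascPochhammer K (2 * m)).eval a =
      4 ^ m * (ascPochhammer K m).eval (a / 2) * (ascPochhammer K m).eval ((a + 1) / 2) := by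
  induction m with
  | zero => simp
  | succ m ih =>
    rw [show 2 * (m + 1) = 2 * m + 1 + 1 by ring]
    simp only [ascPochhammer_succ_eval, ih]
    push_cast
    ring

theorem hasSum_ascPochhammer_div_factorial_mul_pow {a x : ℝ} (hx : |x| < 1) :
    HasSum (fun n : ℕ => (ascPochhammer ℝ n).eval a / n.factorial * x ^ n)
      (1 / (1 - x) ^ a) := by
  have h := (Real.one_div_one_sub_rpow_hasFPowerSeriesOnBall_zero a).hasSum
    (y := x) (by simpa [enorm_eq_nnnorm, ← NNReal.coe_lt_coe] using hx)
  simpa [FormalMultilinearSeries.ofScalars_apply_eq, Ring.choose_add_sub_one_eq, mul_comm] using h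

theorem HasSum.even_coeff_mul_sq_pow {c : ℕ → ℝ} {z A B : ℝ}
    (hA : HasSum (fun n => c n * z ^ n) A) (hB : HasSum (fun n => c n * (-z) ^ n) B) :
    HasSum (fun m => c (2 * m) * (z ^ 2) ^ m) ((A + B) / 2) := by
  have hodd : ∀ n ∉ Set.range (2 * ·), c n * z ^ n + c n * (-z) ^ n = 0 := by
    intro n hn
    have : Odd n := Nat.not_even_iff_odd.1 fun ⟨k, hk⟩ => hn ⟨k, by simp only; omega⟩
    rw [this.neg_pow]
    ring
  have := ((mul_right_injective₀ two_ne_zero).hasSum_iff hodd).2 (hA.add hB)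
  refine (this.div_const 2).congr_fun fun m => ?_
  simp only [Function.comp_apply, Even.neg_pow ⟨m, two_mul m⟩, ← pow_mul]
  ring

theorem hyperF_quarter_threeQuarters_half_coeff (m : ℕ) :
    (ascPochhammer ℝ m).eval (1 / 4) * (ascPochhammer ℝ m).eval (3 / 4) /
        ((ascPochhammer ℝ m).eval (1 / 2) * m.factorial) =
      (ascPochhammer ℝ (2 * m)).eval (1 / 2) / (2 * m).factorial := by
  have hfac :
      ((2 * m).factorial : ℝ) = 4 ^ m * (ascPochhammer ℝ m).eval (1 / 2) * m.factorial := by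
    rw [← ascPochhammer_eval_one, ascPochhammer_eval_two_mul]
    norm_num
  have hpos : 0 < (ascPochhammer ℝ m).eval (1 / 2 : ℝ) := ascPochhammer_pos m _ (by norm_num)
  rw [hfac, ascPochhammer_eval_two_mul]
  field_simp
  norm_num

theorem hyperF_quarter_threeQuarters_half_sq {z : ℝ} (hz : |z| < 1) :
    hyperF (1 / 4) (3 / 4) (1 / 2) (z ^ 2) = (1 / √(1 - z) + 1 / √(1 + z)) / 2 := by
  have hA := hasSum_ascPochhammer_div_factorial_mul_pow (a := 1 / 2) hz
  have hB := hasSum_ascPochhammer_div_factorial_mul_pow (a := 1 / 2) (x := -z) (by rwa [abs_neg])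
  rw [sub_neg_eq_add] at hB
  simp only [sqrt_eq_rpow]
  refine HasSum.tsum_eq ?_
  simpa only [hyperF_quarter_threeQuarters_half_coeff] using hA.even_coeff_mul_sq_pow hB

theorem sqrt_one_sub_add_sqrt_one_add {s : ℝ} (hs : |s| ≤ 1) :
    √(1 - s) + √(1 + s) = 2 * cos (arcsin s / 2) := by
  obtain ⟨hs₁, hs₂⟩ := abs_le.1 hs
  have hhalf : 0 ≤ cos (arcsin s / 2) := cos_nonneg_of_mem_Icc
    ⟨by linarith [neg_pi_div_two_le_arcsin s, pi_pos],
      by linarith [arcsin_le_pi_div_two s, pi_pos]⟩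
  rw [← sq_eq_sq₀ (by positivity) (by positivity)]
  have hprod : √(1 - s) * √(1 + s) = cos (arcsin s) := by
    rw [← sqrt_mul (by linarith), cos_arcsin]
    ring_nf
  calc (√(1 - s) + √(1 + s)) ^ 2 = (1 - s) + (1 + s) + 2 * cos (arcsin s) := by
        rw [add_sq, sq_sqrt (by linarith), sq_sqrt (by linarith), mul_assoc, hprod]
        ring
    _ = (2 * cos (arcsin s / 2)) ^ 2 := by
        rw [mul_pow, cos_sq, show 2 * (arcsin s / 2) = arcsin s by ring]
        ring

theorem inv_sqrt_one_sub_add_inv_sqrt_one_add {s : ℝ} (hs : |s| < 1) :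
    (1 / √(1 - s) + 1 / √(1 + s)) / 2 = cos (arcsin s / 2) / cos (arcsin s) := by
  obtain ⟨hs₁, hs₂⟩ := abs_lt.1 hs
  have hsub : 0 < √(1 - s) := sqrt_pos.2 (by linarith)
  have hadd : 0 < √(1 + s) := sqrt_pos.2 (by linarith)
  have hsum := sqrt_one_sub_add_sqrt_one_add hs.le
  rw [cos_arcsin, show cos (arcsin s / 2) = (√(1 - s) + √(1 + s)) / 2 by linarith,
    show 1 - s ^ 2 = (1 - s) * (1 + s) by ring, sqrt_mul (by linarith)]
  field_simp
  ring

noncomputable def derivG (κ t : ℝ) : ℝ :=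
  cos (arcsin (κ * sin t) / 2) / cos (arcsin (κ * sin t))

theorem G_zero (κ : ℝ) : G κ 0 = 0 := by
  simp [G]

section Modulus

variable {κ : ℝ} (hκ : |κ| < 1)
include hκ

theorem abs_mul_sin_lt_one (t : ℝ) : |κ * sin t| < 1 := by
  rw [abs_mul]
  calc |κ| * |sin t| ≤ |κ| * 1 := by gcongr; exact abs_sin_le_one t
    _ < 1 := by linarith

theorem hyperF_sin_sq_eq_derivG (t : ℝ) :
    hyperF (1 / 4) (3 / 4) (1 / 2) (κ ^ 2 * sin t ^ 2) = derivG κ t := by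
  rw [← mul_pow, hyperF_quarter_threeQuarters_half_sq (abs_mul_sin_lt_one hκ t),
    inv_sqrt_one_sub_add_inv_sqrt_one_add (abs_mul_sin_lt_one hκ t), derivG]

theorem cos_arcsin_mul_sin_pos (t : ℝ) : 0 < cos (arcsin (κ * sin t)) := by
  have := abs_mul_sin_lt_one hκ t
  rw [cos_arcsin, sqrt_pos, sub_pos, ← sq_abs]
  nlinarith [abs_nonneg (κ * sin t)]

theorem derivG_pos (t : ℝ) : 0 < derivG κ t := by
  refine div_pos (cos_pos_of_mem_Ioo ⟨?_, ?_⟩) (cos_arcsin_mul_sin_pos hκ t)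
  · linarith [neg_pi_div_two_le_arcsin (κ * sin t), pi_pos]
  · linarith [arcsin_le_pi_div_two (κ * sin t), pi_pos]

theorem continuous_derivG : Continuous (derivG κ) :=
  Continuous.div (by fun_prop) (by fun_prop) fun t => (cos_arcsin_mul_sin_pos hκ t).ne'

theorem hasDerivAt_G (T : ℝ) : HasDerivAt (G κ) (derivG κ T) T := by
  have hG : G κ = fun T => ∫ t in (0 : ℝ)..T, derivG κ t := by
    funext T
    simp only [G, hyperF_sin_sq_eq_derivG hκ]
  rw [hG]
  exact (continuous_derivG hκ).integral_hasStrictDerivAt 0 T |>.hasDerivAt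

theorem strictMono_G : StrictMono (G κ) :=
  strictMono_of_hasDerivAt_pos (hasDerivAt_G hκ) (derivG_pos hκ)

theorem hasDerivAt_sin_half_arcsin_mul_sin (t : ℝ) :
    HasDerivAt (fun t => sin (arcsin (κ * sin t) / 2)) (κ / 2 * cos t * derivG κ t) t := by
  obtain ⟨h₁, h₂⟩ := abs_lt.1 (abs_mul_sin_lt_one hκ t)
  have hψ : HasDerivAt (fun t => arcsin (κ * sin t))
      (1 / √(1 - (κ * sin t) ^ 2) * (κ * cos t)) t :=
    (hasDerivAt_arcsin h₁.ne' h₂.ne).comp (h₂ := arcsin) t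
      ((hasDerivAt_sin t).const_mul κ)
  refine (hψ.div_const 2).sin.congr_deriv ?_
  rw [derivG, cos_arcsin]
  ring

end Modulus

section Inverse

variable {κ : ℝ} (hκ : |κ| < 1) {φ : ℝ → ℝ} (hφ : Function.RightInverse φ (G κ))
include hκ hφ

theorem leftInverse_of_rightInverse_G : Function.LeftInverse φ (G κ) :=
  fun T => (strictMono_G hκ).injective (hφ (G κ T))

theorem map_zero_of_rightInverse_G : φ 0 = 0 := by
  simpa [G_zero] using leftInverse_of_rightInverse_G hκ hφ 0

theorem continuous_of_rightInverse_G : Continuous φ :=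
  Monotone.continuous_of_surjective
    (fun u v huv => (strictMono_G hκ).le_iff_le.1 (by rwa [hφ u, hφ v]))
    (leftInverse_of_rightInverse_G hκ hφ).surjective

theorem hasDerivAt_of_rightInverse_G (u : ℝ) : HasDerivAt φ (derivG κ (φ u))⁻¹ u :=
  HasDerivAt.of_local_left_inverse (continuous_of_rightInverse_G hκ hφ).continuousAt
    (hasDerivAt_G hκ (φ u)) (derivG_pos hκ (φ u)).ne' (.of_forall hφ)

theorem hasDerivAt_rn (u : ℝ) : HasDerivAt (rn κ φ) (κ / 2 * cos (φ u)) u := by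
  refine ((hasDerivAt_sin_half_arcsin_mul_sin hκ (φ u)).comp u
    (hasDerivAt_of_rightInverse_G hκ hφ u)).congr_deriv ?_
  rw [mul_assoc, mul_inv_cancel₀ (derivG_pos hκ (φ u)).ne', mul_one]

end Inverse

theorem sin_half_pow_four_sub_sin_half_sq (x : ℝ) :
    sin (x / 2) ^ 4 - sin (x / 2) ^ 2 = -(sin x ^ 2 / 4) := by
  have hsin : sin x = 2 * sin (x / 2) * cos (x / 2) := by
    rw [← sin_two_mul, mul_div_cancel₀ x two_ne_zero]
  rw [hsin]
  linear_combination (sin (x / 2) ^ 2) * sin_sq_add_cos_sq (x / 2)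

theorem stmt10_general (κ : ℝ) (hκ₀ : 0 < κ) (hκ₁ : κ < 1)
    (φ : ℝ → ℝ)
    (hφ₂ : Function.RightInverse φ (G κ)) :
    rn κ φ 0 = 0 ∧
      ∀ u : ℝ, (deriv (rn κ φ) u) ^ 2 =
        (rn κ φ u) ^ 4 - (rn κ φ u) ^ 2 + κ ^ 2 / 4 := by
  have hκ : |κ| < 1 := abs_lt.2 ⟨by linarith, hκ₁⟩
  refine ⟨by simp [rn, psi, map_zero_of_rightInverse_G hκ hφ₂], fun u => ?_⟩
  obtain ⟨h₁, h₂⟩ := abs_lt.1 (abs_mul_sin_lt_one hκ (φ u))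
  rw [(hasDerivAt_rn hκ hφ₂ u).deriv, rn, psi, sin_half_pow_four_sub_sin_half_sq,
    sin_arcsin h₁.le h₂.le]
  linear_combination (κ ^ 2 / 4) * sin_sq_add_cos_sq (φ u)

theorem stmt10 (κ : ℝ) (hκ₀ : 0 < κ) (hκ₁ : κ < 1)
    (φ : ℝ → ℝ) (hφ₁ : Function.LeftInverse φ (G κ))
    (hφ₂ : Function.RightInverse φ (G κ)) :
    rn κ φ 0 = 0 ∧
      ∀ u : ℝ, (deriv (rn κ φ) u) ^ 2 =
        (rn κ φ u) ^ 4 - (rn κ φ u) ^ 2 + κ ^ 2 / 4 :=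
  stmt10_general κ hκ₀ hκ₁ φ hφ₂
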